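/- arXiv:1906.07803 — 2 statements merged into one kernel-verified Lean document; each statement's English description precedes it below -/
import Mathlib

section
/- There exists a constant C > 0 depending only on T (in particular independent of ε, L, M, φ and g) such that sup_{t∈[0,T]} ∫₀^L φ(t,x)² dx ≤ C ( ∫₀^L φ(0,x)² dx + ∫₀^T ∫₀^L g(t,x)² dx dt ) and ε ∫₀^T ∫₀^L φ_xx(t,x)² dx dt ≤ C ( ∫₀^L φ(0,x)² dx + ∫₀^T ∫₀^L g(t,x)² dx dt ). -/
set_option maxHeartbeats 1000000

open Real MeasureTheory Set intervalIntegral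

private lemma aux_hasDerivAt_sq_integral {φ : ℝ → ℝ → ℝ} {L : ℝ}
    (hφ : Continuous fun p : ℝ × ℝ => φ p.1 p.2)
    (hφt : ∀ t x : ℝ, DifferentiableAt ℝ (fun s => φ s x) t)
    (hφtc : Continuous fun p : ℝ × ℝ => deriv (fun s => φ s p.2) p.1) (t₀ : ℝ) :
    HasDerivAt (fun t => ∫ x in (0:ℝ)..L, (φ t x) ^ 2)
      (∫ x in (0:ℝ)..L, 2 * φ t₀ x * deriv (fun s => φ s x) t₀) t₀ := by
  have hF' : Continuous fun p : ℝ × ℝ => 2 * φ p.1 p.2 * deriv (fun s => φ s p.2) p.1 :=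
    (continuous_const.mul hφ).mul hφtc
  obtain ⟨C, hC⟩ := (IsCompact.exists_bound_of_continuousOn
    ((isCompact_Icc (a := t₀ - 1) (b := t₀ + 1)).prod (isCompact_uIcc (a := (0:ℝ)) (b := L)))
    hF'.continuousOn)
  have hsub : Metric.ball t₀ 1 ⊆ Icc (t₀ - 1) (t₀ + 1) := by
    rw [Real.ball_eq_Ioo]; exact Ioo_subset_Icc_self
  have key := intervalIntegral.hasDerivAt_integral_of_dominated_loc_of_deriv_le
    (F := fun t x => (φ t x) ^ 2)
    (F' := fun t x => 2 * φ t x * deriv (fun s => φ s x) t)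
    (x₀ := t₀) (a := (0:ℝ)) (b := L) (bound := fun _ => C) (μ := volume)
    (s := Metric.ball t₀ 1) (Metric.ball_mem_nhds t₀ zero_lt_one)
    (Filter.Eventually.of_forall fun t =>
      (((hφ.comp (Continuous.prodMk_right t)).pow 2).aestronglyMeasurable).restrict)
    (((hφ.comp (Continuous.prodMk_right t₀)).pow 2).intervalIntegrable 0 L)
    ((hF'.comp (Continuous.prodMk_right t₀)).aestronglyMeasurable).restrict
    (Filter.Eventually.of_forall fun x hx t ht =>
      hC (t, x) (mk_mem_prod (hsub ht) (uIoc_subset_uIcc hx)))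
    (intervalIntegrable_const)
    (Filter.Eventually.of_forall fun x hx t ht => by
      simpa using (hφt t x).hasDerivAt.fun_pow 2)
  exact key.2

private lemma aux_hasDeriv_iter {ψ : ℝ → ℝ} (hψ : ContDiff ℝ 4 ψ) (n : ℕ) (hn : n < 4) (x : ℝ) :
    HasDerivAt (iteratedDeriv n ψ) (iteratedDeriv (n + 1) ψ x) x := by
  have h := (hψ.differentiable_iteratedDeriv n (by exact_mod_cast hn)) x
  rw [iteratedDeriv_succ]
  exact h.hasDerivAt

private lemma aux_ibp {ψ : ℝ → ℝ} (hψ : ContDiff ℝ 4 ψ) {L : ℝ} (hL : 0 < L) {ε δ M : ℝ}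
    (hbc0 : ψ 0 = 0) (hbcL : ψ L = 0)
    (hnbc0 : ε * iteratedDeriv 2 ψ 0 - δ / 2 * deriv ψ 0 = 0)
    (hnbcL : ε * iteratedDeriv 2 ψ L - δ / 2 * deriv ψ L = 0) :
    ∫ x in (0:ℝ)..L, ψ x * (ε * iteratedDeriv 4 ψ x - δ * iteratedDeriv 3 ψ x - M * deriv ψ x)
      = ε * ∫ x in (0:ℝ)..L, (iteratedDeriv 2 ψ x) ^ 2 := by
  have hcont : ∀ n : ℕ, n ≤ 4 → Continuous (iteratedDeriv n ψ) := fun n hn =>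
    hψ.continuous_iteratedDeriv n (by exact_mod_cast hn)
  have hD : ∀ n : ℕ, n < 4 → ∀ x, HasDerivAt (iteratedDeriv n ψ) (iteratedDeriv (n+1) ψ x) x :=
    fun n hn x => aux_hasDeriv_iter hψ n hn x
  have h0 : iteratedDeriv 0 ψ = ψ := iteratedDeriv_zero
  have h1 : iteratedDeriv 1 ψ = deriv ψ := iteratedDeriv_one
  have I4 : ∫ x in (0:ℝ)..L, ψ x * iteratedDeriv 4 ψ x
      = ψ L * iteratedDeriv 3 ψ L - ψ 0 * iteratedDeriv 3 ψ 0
        - ∫ x in (0:ℝ)..L, deriv ψ x * iteratedDeriv 3 ψ x := by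
    have := integral_mul_deriv_eq_deriv_mul (a := (0:ℝ)) (b := L)
      (u := ψ) (u' := deriv ψ) (v := iteratedDeriv 3 ψ) (v' := iteratedDeriv 4 ψ)
      (fun x _ => by simpa [h0, h1] using hD 0 (by norm_num) x)
      (fun x _ => hD 3 (by norm_num) x)
      ((h1 ▸ hcont 1 (by norm_num)).intervalIntegrable 0 L)
      ((hcont 4 le_rfl).intervalIntegrable 0 L)
    linarith [this]
  have I13 : ∫ x in (0:ℝ)..L, deriv ψ x * iteratedDeriv 3 ψ x
      = deriv ψ L * iteratedDeriv 2 ψ L - deriv ψ 0 * iteratedDeriv 2 ψ 0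
        - ∫ x in (0:ℝ)..L, (iteratedDeriv 2 ψ x) ^ 2 := by
    have := integral_mul_deriv_eq_deriv_mul (a := (0:ℝ)) (b := L)
      (u := deriv ψ) (u' := iteratedDeriv 2 ψ) (v := iteratedDeriv 2 ψ)
      (v' := iteratedDeriv 3 ψ)
      (fun x _ => by simpa [h1] using hD 1 (by norm_num) x)
      (fun x _ => hD 2 (by norm_num) x)
      ((hcont 2 (by norm_num)).intervalIntegrable 0 L)
      ((hcont 3 (by norm_num)).intervalIntegrable 0 L)
    have hsq : ∀ x, iteratedDeriv 2 ψ x * iteratedDeriv 2 ψ x = (iteratedDeriv 2 ψ x) ^ 2 :=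
      fun x => (sq (iteratedDeriv 2 ψ x)).symm
    simp only [hsq] at this
    linarith [this]
  have I3 : ∫ x in (0:ℝ)..L, ψ x * iteratedDeriv 3 ψ x
      = ψ L * iteratedDeriv 2 ψ L - ψ 0 * iteratedDeriv 2 ψ 0
        - ∫ x in (0:ℝ)..L, deriv ψ x * iteratedDeriv 2 ψ x := by
    have := integral_mul_deriv_eq_deriv_mul (a := (0:ℝ)) (b := L)
      (u := ψ) (u' := deriv ψ) (v := iteratedDeriv 2 ψ) (v' := iteratedDeriv 3 ψ)
      (fun x _ => by simpa [h0, h1] using hD 0 (by norm_num) x)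
      (fun x _ => hD 2 (by norm_num) x)
      ((h1 ▸ hcont 1 (by norm_num)).intervalIntegrable 0 L)
      ((hcont 3 (by norm_num)).intervalIntegrable 0 L)
    linarith [this]
  have I12 : (2:ℝ) * ∫ x in (0:ℝ)..L, deriv ψ x * iteratedDeriv 2 ψ x
      = deriv ψ L ^ 2 - deriv ψ 0 ^ 2 := by
    have := integral_mul_deriv_eq_deriv_mul (a := (0:ℝ)) (b := L)
      (u := deriv ψ) (u' := iteratedDeriv 2 ψ) (v := deriv ψ) (v' := iteratedDeriv 2 ψ)
      (fun x _ => by simpa [h1] using hD 1 (by norm_num) x)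
      (fun x _ => by simpa [h1] using hD 1 (by norm_num) x)
      ((hcont 2 (by norm_num)).intervalIntegrable 0 L)
      ((hcont 2 (by norm_num)).intervalIntegrable 0 L)
    have h2 : ∫ x in (0:ℝ)..L, iteratedDeriv 2 ψ x * deriv ψ x
        = ∫ x in (0:ℝ)..L, deriv ψ x * iteratedDeriv 2 ψ x := by
      congr 1; ext x; ring
    rw [h2] at this
    nlinarith [this]
  have I1 : (2:ℝ) * ∫ x in (0:ℝ)..L, ψ x * deriv ψ x = ψ L ^ 2 - ψ 0 ^ 2 := by
    have := integral_mul_deriv_eq_deriv_mul (a := (0:ℝ)) (b := L)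
      (u := ψ) (u' := deriv ψ) (v := ψ) (v' := deriv ψ)
      (fun x _ => by simpa [h0, h1] using hD 0 (by norm_num) x)
      (fun x _ => by simpa [h0, h1] using hD 0 (by norm_num) x)
      ((h1 ▸ hcont 1 (by norm_num)).intervalIntegrable 0 L)
      ((h1 ▸ hcont 1 (by norm_num)).intervalIntegrable 0 L)
    have h2 : ∫ x in (0:ℝ)..L, deriv ψ x * ψ x = ∫ x in (0:ℝ)..L, ψ x * deriv ψ x := by
      congr 1; ext x; ring
    rw [h2] at this
    nlinarith [this]
  have cψ : Continuous ψ := hψ.continuous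
  have e4 : IntervalIntegrable (fun x => ψ x * iteratedDeriv 4 ψ x) volume 0 L :=
    (cψ.mul (hcont 4 le_rfl)).intervalIntegrable 0 L
  have e3 : IntervalIntegrable (fun x => ψ x * iteratedDeriv 3 ψ x) volume 0 L :=
    (cψ.mul (hcont 3 (by norm_num))).intervalIntegrable 0 L
  have e1 : IntervalIntegrable (fun x => ψ x * deriv ψ x) volume 0 L :=
    (cψ.mul (h1 ▸ hcont 1 (by norm_num))).intervalIntegrable 0 L
  have hsplit : ∫ x in (0:ℝ)..L,
        ψ x * (ε * iteratedDeriv 4 ψ x - δ * iteratedDeriv 3 ψ x - M * deriv ψ x)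
      = ε * (∫ x in (0:ℝ)..L, ψ x * iteratedDeriv 4 ψ x)
        - δ * (∫ x in (0:ℝ)..L, ψ x * iteratedDeriv 3 ψ x)
        - M * (∫ x in (0:ℝ)..L, ψ x * deriv ψ x) := by
    have : (fun x => ψ x * (ε * iteratedDeriv 4 ψ x - δ * iteratedDeriv 3 ψ x - M * deriv ψ x))
        = fun x => ε * (ψ x * iteratedDeriv 4 ψ x) - δ * (ψ x * iteratedDeriv 3 ψ x)
          - M * (ψ x * deriv ψ x) := by ext x; ring
    rw [this, intervalIntegral.integral_sub ((e4.const_mul ε).sub (e3.const_mul δ))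
        (e1.const_mul M),
      intervalIntegral.integral_sub (e4.const_mul ε) (e3.const_mul δ),
      intervalIntegral.integral_const_mul, intervalIntegral.integral_const_mul,
      intervalIntegral.integral_const_mul]
  rw [hsplit, I4, I13, I3]
  have hbd : deriv ψ L * (ε * iteratedDeriv 2 ψ L - δ / 2 * deriv ψ L) = 0 := by
    rw [hnbcL]; ring
  have hbd0 : deriv ψ 0 * (ε * iteratedDeriv 2 ψ 0 - δ / 2 * deriv ψ 0) = 0 := by
    rw [hnbc0]; ring
  rw [hbc0, hbcL]
  rw [hbc0, hbcL] at I1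
  linear_combination (δ/2) * I12 - (M/2) * I1 + hbd0 - hbd

private lemma aux_energy {T ε : ℝ} (hT : 0 < T) (hε : 0 < ε) {E P Dq Gq : ℝ → ℝ}
    (hE' : ∀ t ∈ Icc (0:ℝ) T, HasDerivAt E (2 * P t - 2 * ε * Dq t) t)
    (hPc : Continuous P) (hDqc : Continuous Dq) (hGqc : Continuous Gq)
    (hDq0 : ∀ t, 0 ≤ Dq t) (hGq0 : ∀ t, 0 ≤ Gq t) (hE0 : ∀ t, 0 ≤ E t)
    (hP : ∀ t ∈ Icc (0:ℝ) T, 2 * P t ≤ E t + Gq t) :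
    (∀ t ∈ Icc (0:ℝ) T,
        E t ≤ ((T + 3) * Real.exp T + 3) * (E 0 + ∫ s in (0:ℝ)..T, Gq s)) ∧
      ε * ∫ t in (0:ℝ)..T, Dq t
        ≤ ((T + 3) * Real.exp T + 3) * (E 0 + ∫ s in (0:ℝ)..T, Gq s) := by
  have hT0 : (0:ℝ) ≤ T := hT.le
  set C : ℝ := (T + 3) * Real.exp T + 3 with hC
  set IG : ℝ := ∫ s in (0:ℝ)..T, Gq s with hIGdef
  have hIG0 : 0 ≤ IG := intervalIntegral.integral_nonneg hT0 fun s _ => hGq0 s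
  have hA0 : 0 ≤ E 0 + IG := add_nonneg (hE0 0) hIG0
  have hGint : ∀ a b : ℝ, IntervalIntegrable Gq volume a b := fun a b =>
    hGqc.intervalIntegrable a b
  have hEcont : ContinuousOn E (Icc (0:ℝ) T) := fun t ht =>
    (hE' t ht).continuousAt.continuousWithinAt
  have hpartial : ∀ t ∈ Icc (0:ℝ) T,
      0 ≤ (∫ s in (0:ℝ)..t, Gq s) ∧ (∫ s in (0:ℝ)..t, Gq s) ≤ IG := by
    intro t ht
    constructor
    · exact intervalIntegral.integral_nonneg ht.1 fun s _ => hGq0 s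
    · have hadd : (∫ s in (0:ℝ)..t, Gq s) + (∫ s in t..T, Gq s) = IG :=
        intervalIntegral.integral_add_adjacent_intervals (hGint 0 t) (hGint t T)
      have : 0 ≤ ∫ s in t..T, Gq s :=
        intervalIntegral.integral_nonneg ht.2 fun s _ => hGq0 s
      linarith
  have hHder : ∀ t ∈ Icc (0:ℝ) T,
      HasDerivAt (fun t => E t - ∫ s in (0:ℝ)..t, Gq s)
        (2 * P t - 2 * ε * Dq t - Gq t) t := by
    intro t ht
    exact (hE' t ht).sub (intervalIntegral.integral_hasDerivAt_right (hGint 0 t)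
      hGqc.stronglyMeasurable.stronglyMeasurableAtFilter hGqc.continuousAt)
  have hgron := le_gronwallBound_of_liminf_deriv_right_le
    (f := fun t => E t - ∫ s in (0:ℝ)..t, Gq s)
    (f' := fun t => 2 * P t - 2 * ε * Dq t - Gq t) (δ := E 0) (K := 1) (ε := IG)
    (a := 0) (b := T)
    (fun t ht => (hHder t ht).continuousAt.continuousWithinAt)
    (fun t ht r hr => by
      have h := ((hHder t (Ico_subset_Icc_self ht)).hasDerivWithinAt
        (s := Ici t)).liminf_right_slope_le hr
      simpa only [slope_def_field, div_eq_inv_mul] using h)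
    (by simp)
    (fun t ht => by
      have h1 := hP t (Ico_subset_Icc_self ht)
      have h2 := (hpartial t (Ico_subset_Icc_self ht)).2
      have h3 := hDq0 t
      have h4 : 0 ≤ ε * Dq t := mul_nonneg hε.le (hDq0 t)
      nlinarith)
  have hEbound : ∀ t ∈ Icc (0:ℝ) T, E t ≤ Real.exp T * (E 0 + IG) := by
    intro t ht
    have h := hgron t ht
    rw [gronwallBound_of_K_ne_0 one_ne_zero] at h
    have hpart := hpartial t ht
    have hexp : Real.exp t ≤ Real.exp T := Real.exp_le_exp.2 ht.2
    have hexp1 : 1 ≤ Real.exp t := Real.one_le_exp ht.1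
    simp only [one_mul, sub_zero, div_one] at h
    nlinarith [hE0 0]
  have hexpC : Real.exp T ≤ C := by
    have := Real.exp_pos T
    rw [hC]; nlinarith
  constructor
  · intro t ht
    calc E t ≤ Real.exp T * (E 0 + IG) := hEbound t ht
      _ ≤ C * (E 0 + IG) := mul_le_mul_of_nonneg_right hexpC hA0
  · have hEint : IntervalIntegrable E volume 0 T := by
      apply ContinuousOn.intervalIntegrable
      rwa [uIcc_of_le hT0]
    have hFTC : E T - E 0 = ∫ t in (0:ℝ)..T, (2 * P t - 2 * ε * Dq t) := by
      refine (intervalIntegral.integral_eq_sub_of_hasDerivAt ?_ ?_).symm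
      · intro t ht
        exact hE' t (by rwa [uIcc_of_le hT0] at ht)
      · exact ((continuous_const.mul hPc).sub (continuous_const.mul hDqc)).intervalIntegrable 0 T
    have hsplit : ∫ t in (0:ℝ)..T, (2 * P t - 2 * ε * Dq t)
        = (∫ t in (0:ℝ)..T, 2 * P t) - 2 * ε * ∫ t in (0:ℝ)..T, Dq t := by
      rw [intervalIntegral.integral_sub ((continuous_const.fun_mul hPc).intervalIntegrable 0 T)
        ((continuous_const.fun_mul hDqc).intervalIntegrable 0 T),
        intervalIntegral.integral_const_mul, intervalIntegral.integral_const_mul]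
    have hPint : (∫ t in (0:ℝ)..T, 2 * P t)
        ≤ ∫ t in (0:ℝ)..T, (Real.exp T * (E 0 + IG) + Gq t) := by
      apply intervalIntegral.integral_mono_on hT0
        ((continuous_const.fun_mul hPc).intervalIntegrable 0 T)
        ((continuous_const.fun_add hGqc).intervalIntegrable 0 T)
      intro t ht
      have := hP t ht
      have := hEbound t ht
      linarith
    have hconst : (∫ t in (0:ℝ)..T, (Real.exp T * (E 0 + IG) + Gq t))
        = T * (Real.exp T * (E 0 + IG)) + IG := by
      rw [intervalIntegral.integral_add (intervalIntegrable_const) (hGint 0 T),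
        intervalIntegral.integral_const]
      simp [smul_eq_mul]
      rfl
    have hET : 0 ≤ E T := hE0 T
    have hfin : 2 * ε * (∫ t in (0:ℝ)..T, Dq t)
        ≤ T * (Real.exp T * (E 0 + IG)) + IG + E 0 := by
      have := hFTC
      rw [hsplit] at this
      linarith [hPint, hconst.le, hconst.ge]
    have hCbig : T * Real.exp T + 1 ≤ 2 * C := by
      have := Real.exp_pos T
      rw [hC]; nlinarith
    have h2 : 2 * ε * (∫ t in (0:ℝ)..T, Dq t) ≤ (T * Real.exp T + 1) * (E 0 + IG) := by
      nlinarith [hE0 0, hIG0]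
    nlinarith [mul_le_mul_of_nonneg_right hCbig hA0]

/-- energy estimates with a constant `C` depending only on `T`
(independent of `ε`, `L`, `M`, `φ` and `g`). -/
theorem stmt_18 (T : ℝ) (hT : 0 < T) :
    ∃ C : ℝ, 0 < C ∧
      ∀ (L ε M M13 δ : ℝ), 0 < L → 0 < ε → M ≠ 0 → M13 ^ 3 = M →
        δ = -2 * ε ^ ((2:ℝ)/3) * M13 →
      ∀ g φ : ℝ → ℝ → ℝ,
        (Continuous fun p : ℝ × ℝ => g p.1 p.2) →
        (∀ t : ℝ, ContDiff ℝ 4 (φ t)) →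
        (∀ t x : ℝ, DifferentiableAt ℝ (fun s => φ s x) t) →
        (Continuous fun p : ℝ × ℝ => deriv (fun s => φ s p.2) p.1) →
        (∀ n : ℕ, n ≤ 4 →
          Continuous fun p : ℝ × ℝ => iteratedDeriv n (φ p.1) p.2) →
        (∀ t ∈ Set.Ioo (0:ℝ) T, ∀ x ∈ Set.Ioo (0:ℝ) L,
          deriv (fun s => φ s x) t + ε * iteratedDeriv 4 (φ t) x
            - δ * iteratedDeriv 3 (φ t) x - M * deriv (φ t) x = g t x) →
        (∀ t ∈ Set.Ioo (0:ℝ) T, φ t 0 = 0 ∧ φ t L = 0) →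
        (∀ t ∈ Set.Ioo (0:ℝ) T,
          (ε * iteratedDeriv 2 (φ t) 0 - δ/2 * deriv (φ t) 0 = 0) ∧
          (ε * iteratedDeriv 2 (φ t) L - δ/2 * deriv (φ t) L = 0)) →
        (∀ t ∈ Set.Icc (0:ℝ) T,
          (∫ x in (0:ℝ)..L, (φ t x)^2)
            ≤ C * ((∫ x in (0:ℝ)..L, (φ 0 x)^2)
              + ∫ t' in (0:ℝ)..T, ∫ x in (0:ℝ)..L, (g t' x)^2)) ∧
        ε * (∫ t in (0:ℝ)..T, ∫ x in (0:ℝ)..L, (iteratedDeriv 2 (φ t) x)^2)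
          ≤ C * ((∫ x in (0:ℝ)..L, (φ 0 x)^2)
            + ∫ t' in (0:ℝ)..T, ∫ x in (0:ℝ)..L, (g t' x)^2) := by
  refine ⟨(T + 3) * Real.exp T + 3, by nlinarith [Real.exp_pos T], ?_⟩
  intro L ε M M13 δ hL hε hM hM13 hδ g φ hg hφ hφt hφtc hcont hPDE hbc hnbc
  -- basic continuity facts
  have contφ : Continuous fun p : ℝ × ℝ => φ p.1 p.2 := by
    simpa only [iteratedDeriv_zero] using hcont 0 (by norm_num)
  have contd1 : Continuous fun p : ℝ × ℝ => deriv (φ p.1) p.2 := by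
    simpa only [iteratedDeriv_one] using hcont 1 (by norm_num)
  -- extend PDE to the closed box
  have hPDEc : ∀ t ∈ Icc (0:ℝ) T, ∀ x ∈ Icc (0:ℝ) L,
      deriv (fun s => φ s x) t + ε * iteratedDeriv 4 (φ t) x
        - δ * iteratedDeriv 3 (φ t) x - M * deriv (φ t) x = g t x := by
    have hF : Continuous fun p : ℝ × ℝ =>
        deriv (fun s => φ s p.2) p.1 + ε * iteratedDeriv 4 (φ p.1) p.2
          - δ * iteratedDeriv 3 (φ p.1) p.2 - M * deriv (φ p.1) p.2 - g p.1 p.2 :=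
      ((((hφtc.add (continuous_const.mul (hcont 4 le_rfl))).sub
        (continuous_const.mul (hcont 3 (by norm_num)))).sub
        (continuous_const.mul contd1)).sub hg)
    have hclosed : closure (Ioo (0:ℝ) T ×ˢ Ioo (0:ℝ) L) ⊆
        {p : ℝ × ℝ | deriv (fun s => φ s p.2) p.1 + ε * iteratedDeriv 4 (φ p.1) p.2
          - δ * iteratedDeriv 3 (φ p.1) p.2 - M * deriv (φ p.1) p.2 - g p.1 p.2 = 0} := by
      apply closure_minimal
      · rintro ⟨t, x⟩ ⟨ht, hx⟩
        have := hPDE t ht x hx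
        simp only [mem_setOf_eq]
        linarith
      · exact isClosed_eq hF continuous_const
    intro t ht x hx
    have hmem : (t, x) ∈ closure (Ioo (0:ℝ) T ×ˢ Ioo (0:ℝ) L) := by
      rw [closure_prod_eq, closure_Ioo hT.ne, closure_Ioo hL.ne]
      exact ⟨ht, hx⟩
    have := hclosed hmem
    simp only [mem_setOf_eq] at this
    linarith
  -- extend boundary conditions to the closed time interval
  have hbc0 : ∀ t ∈ Icc (0:ℝ) T, φ t 0 = 0 := by
    intro t ht
    have hc : Continuous ((fun p : ℝ × ℝ => φ p.1 p.2) ∘ fun s : ℝ => (s, (0:ℝ))) :=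
      contφ.comp (continuous_id.prodMk continuous_const)
    have : Icc (0:ℝ) T ⊆ {s : ℝ | φ s 0 = 0} := by
      rw [← closure_Ioo hT.ne]
      exact closure_minimal (fun s hs => (hbc s hs).1) (isClosed_eq hc continuous_const)
    exact this ht
  have hbcL : ∀ t ∈ Icc (0:ℝ) T, φ t L = 0 := by
    intro t ht
    have hc : Continuous ((fun p : ℝ × ℝ => φ p.1 p.2) ∘ fun s : ℝ => (s, L)) :=
      contφ.comp (continuous_id.prodMk continuous_const)
    have : Icc (0:ℝ) T ⊆ {s : ℝ | φ s L = 0} := by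
      rw [← closure_Ioo hT.ne]
      exact closure_minimal (fun s hs => (hbc s hs).2) (isClosed_eq hc continuous_const)
    exact this ht
  have hnbc' : ∀ y : ℝ, (∀ t ∈ Set.Ioo (0:ℝ) T,
        ε * iteratedDeriv 2 (φ t) y - δ/2 * deriv (φ t) y = 0) →
      ∀ t ∈ Icc (0:ℝ) T, ε * iteratedDeriv 2 (φ t) y - δ/2 * deriv (φ t) y = 0 := by
    intro y hy t ht
    have hc : Continuous fun s : ℝ => ε * iteratedDeriv 2 (φ s) y - δ/2 * deriv (φ s) y := by
      have h2 : Continuous ((fun p : ℝ × ℝ => iteratedDeriv 2 (φ p.1) p.2) ∘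
          fun s : ℝ => (s, y)) :=
        (hcont 2 (by norm_num)).comp (continuous_id.prodMk continuous_const)
      have h1 : Continuous ((fun p : ℝ × ℝ => deriv (φ p.1) p.2) ∘ fun s : ℝ => (s, y)) :=
        contd1.comp (continuous_id.prodMk continuous_const)
      have h2' : Continuous fun s : ℝ => iteratedDeriv 2 (φ s) y := h2
      have h1' : Continuous fun s : ℝ => deriv (φ s) y := h1
      exact (continuous_const.mul h2').sub (continuous_const.mul h1')
    have : Icc (0:ℝ) T ⊆
        {s : ℝ | ε * iteratedDeriv 2 (φ s) y - δ/2 * deriv (φ s) y = 0} := by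
      rw [← closure_Ioo hT.ne]
      exact closure_minimal hy (isClosed_eq hc continuous_const)
    exact this ht
  have hnbc0 : ∀ t ∈ Icc (0:ℝ) T,
      ε * iteratedDeriv 2 (φ t) 0 - δ/2 * deriv (φ t) 0 = 0 :=
    hnbc' 0 (fun t ht => (hnbc t ht).1)
  have hnbcL : ∀ t ∈ Icc (0:ℝ) T,
      ε * iteratedDeriv 2 (φ t) L - δ/2 * deriv (φ t) L = 0 :=
    hnbc' L (fun t ht => (hnbc t ht).2)
  -- key derivative identity for the energy
  have hEkey : ∀ t ∈ Icc (0:ℝ) T,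
      HasDerivAt (fun t => ∫ x in (0:ℝ)..L, (φ t x) ^ 2)
        (2 * (∫ x in (0:ℝ)..L, g t x * φ t x)
          - 2 * ε * ∫ x in (0:ℝ)..L, (iteratedDeriv 2 (φ t) x) ^ 2) t := by
    intro t ht
    have h := aux_hasDerivAt_sq_integral contφ hφt hφtc (L := L) t
    have cφt : Continuous (φ t) := (hφ t).continuous
    have cgt : Continuous fun x => g t x := hg.comp (Continuous.prodMk_right t)
    have cg : Continuous fun x => g t x * φ t x := cgt.mul cφt
    have cb : Continuous fun x => φ t x * (ε * iteratedDeriv 4 (φ t) x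
        - δ * iteratedDeriv 3 (φ t) x - M * deriv (φ t) x) :=
      cφt.mul (((continuous_const.mul ((hφ t).continuous_iteratedDeriv 4 (by norm_num))).sub
        (continuous_const.mul ((hφ t).continuous_iteratedDeriv 3 (by norm_num)))).sub
        (continuous_const.mul ((hφ t).continuous_deriv (by norm_num))))
    have heq : (∫ x in (0:ℝ)..L, 2 * φ t x * deriv (fun s => φ s x) t)
        = 2 * (∫ x in (0:ℝ)..L, g t x * φ t x)
          - 2 * ε * ∫ x in (0:ℝ)..L, (iteratedDeriv 2 (φ t) x) ^ 2 := by
      have hstep1 : EqOn (fun x => 2 * φ t x * deriv (fun s => φ s x) t)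
          (fun x => 2 * (g t x * φ t x) - 2 * (φ t x * (ε * iteratedDeriv 4 (φ t) x
            - δ * iteratedDeriv 3 (φ t) x - M * deriv (φ t) x))) (uIcc 0 L) := by
        intro x hx
        rw [uIcc_of_le hL.le] at hx
        have hp := hPDEc t ht x hx
        dsimp only
        linear_combination (2 * φ t x) * hp
      rw [intervalIntegral.integral_congr hstep1,
        intervalIntegral.integral_sub ((continuous_const.fun_mul cg).intervalIntegrable 0 L)
          ((continuous_const.fun_mul cb).intervalIntegrable 0 L),
        intervalIntegral.integral_const_mul, intervalIntegral.integral_const_mul,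
        aux_ibp (hφ t) hL (hbc0 t ht) (hbcL t ht) (hnbc0 t ht) (hnbcL t ht)]
      ring
    exact heq ▸ h
  -- parametric continuity
  have hPc : Continuous fun t => ∫ x in (0:ℝ)..L, g t x * φ t x :=
    intervalIntegral.continuous_parametric_intervalIntegral_of_continuous' (μ := volume)
      (f := fun t x => g t x * φ t x) (hg.mul contφ) 0 L
  have hDqc : Continuous fun t => ∫ x in (0:ℝ)..L, (iteratedDeriv 2 (φ t) x) ^ 2 :=
    intervalIntegral.continuous_parametric_intervalIntegral_of_continuous' (μ := volume)
      (f := fun t x => (iteratedDeriv 2 (φ t) x) ^ 2) ((hcont 2 (by norm_num)).fun_pow 2) 0 L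
  have hGqc : Continuous fun t => ∫ x in (0:ℝ)..L, (g t x) ^ 2 :=
    intervalIntegral.continuous_parametric_intervalIntegral_of_continuous' (μ := volume)
      (f := fun t x => (g t x) ^ 2) (hg.fun_pow 2) 0 L
  -- nonnegativity
  have hE0 : ∀ t : ℝ, 0 ≤ ∫ x in (0:ℝ)..L, (φ t x) ^ 2 := fun t =>
    intervalIntegral.integral_nonneg hL.le fun x _ => sq_nonneg _
  have hDq0 : ∀ t : ℝ, 0 ≤ ∫ x in (0:ℝ)..L, (iteratedDeriv 2 (φ t) x) ^ 2 := fun t =>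
    intervalIntegral.integral_nonneg hL.le fun x _ => sq_nonneg _
  have hGq0 : ∀ t : ℝ, 0 ≤ ∫ x in (0:ℝ)..L, (g t x) ^ 2 := fun t =>
    intervalIntegral.integral_nonneg hL.le fun x _ => sq_nonneg _
  -- Cauchy-Schwarz-type bound
  have hP : ∀ t ∈ Icc (0:ℝ) T, 2 * (∫ x in (0:ℝ)..L, g t x * φ t x)
      ≤ (∫ x in (0:ℝ)..L, (φ t x) ^ 2) + ∫ x in (0:ℝ)..L, (g t x) ^ 2 := by
    intro t _
    have cφt : Continuous (φ t) := (hφ t).continuous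
    have cgt : Continuous fun x => g t x := hg.comp (Continuous.prodMk_right t)
    have h1 : 2 * (∫ x in (0:ℝ)..L, g t x * φ t x)
        = ∫ x in (0:ℝ)..L, 2 * (g t x * φ t x) :=
      (intervalIntegral.integral_const_mul 2 _).symm
    have h2 : (∫ x in (0:ℝ)..L, 2 * (g t x * φ t x))
        ≤ ∫ x in (0:ℝ)..L, ((φ t x) ^ 2 + (g t x) ^ 2) := by
      apply intervalIntegral.integral_mono_on hL.le
        ((continuous_const.fun_mul (cgt.fun_mul cφt)).intervalIntegrable 0 L)
        (((cφt.fun_pow 2).fun_add (cgt.fun_pow 2)).intervalIntegrable 0 L)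
      intro x _
      nlinarith [sq_nonneg (g t x - φ t x)]
    have h3 : (∫ x in (0:ℝ)..L, ((φ t x) ^ 2 + (g t x) ^ 2))
        = (∫ x in (0:ℝ)..L, (φ t x) ^ 2) + ∫ x in (0:ℝ)..L, (g t x) ^ 2 :=
      intervalIntegral.integral_add ((cφt.pow 2).intervalIntegrable 0 L)
        ((cgt.pow 2).intervalIntegrable 0 L)
    linarith [h1.le, h1.ge, h2, h3.le, h3.ge]
  exact aux_energy hT hε hEkey hPc hDqc hGqc hDq0 hGq0 hE0 hP
end

section
/- Assume additionally that ε ∈ (0,1]. Then there exists a constant C > 0 depending only on T and L (independent of ε, φ and g) such that the boundary observation satisfies ε ∫₀^T φ_x(t,0)² dt ≤ C ( ∫₀^L φ(0,x)² dx + ∫₀^T ∫₀^L g(t,x)² dx dt ). -/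
set_option maxHeartbeats 2000000

open Real MeasureTheory intervalIntegral Set

lemma aux_cont {f : ℝ → ℝ} (hf : ContDiff ℝ 4 f) (k : ℕ) (hk : k ≤ 4) :
    Continuous (iteratedDeriv k f) := hf.continuous_iteratedDeriv k (by exact_mod_cast hk)

lemma aux_diff {f : ℝ → ℝ} (hf : ContDiff ℝ 4 f) (k : ℕ) (hk : k < 4) :
    Differentiable ℝ (iteratedDeriv k f) := hf.differentiable_iteratedDeriv k (by exact_mod_cast hk)

lemma aux_hasDeriv {f : ℝ → ℝ} (hf : ContDiff ℝ 4 f) (k : ℕ) (hk : k < 4) (x : ℝ) :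
    HasDerivAt (iteratedDeriv k f) (iteratedDeriv (k+1) f x) x := by
  rw [iteratedDeriv_succ]
  exact ((aux_diff hf k hk) x).hasDerivAt

/-- Cauchy–Schwarz for a continuous function on `[0, ξ]`. -/
lemma cs_sq {f : ℝ → ℝ} (hf : Continuous f) {ξ : ℝ} (hξ : 0 < ξ) :
    (∫ x in (0:ℝ)..ξ, f x) ^ 2 ≤ ξ * ∫ x in (0:ℝ)..ξ, (f x) ^ 2 := by
  set I : ℝ := ∫ x in (0:ℝ)..ξ, f x with hI
  set m : ℝ := I / ξ with hm
  have h0 : (0:ℝ) ≤ ∫ x in (0:ℝ)..ξ, (f x - m) ^ 2 := by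
    apply intervalIntegral.integral_nonneg hξ.le
    intro x _; positivity
  have hexp : ∫ x in (0:ℝ)..ξ, (f x - m) ^ 2
      = (∫ x in (0:ℝ)..ξ, (f x) ^ 2) - 2 * m * I + m ^ 2 * ξ := by
    have h1 : ∀ x, (f x - m) ^ 2 = (f x) ^ 2 - (2*m) * f x + m ^ 2 := by intro x; ring
    rw [intervalIntegral.integral_congr (fun x _ => h1 x)]
    rw [intervalIntegral.integral_add, intervalIntegral.integral_sub]
    · simp [intervalIntegral.integral_const_mul, ← hI]; ring
    · exact (hf.pow 2).intervalIntegrable _ _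
    · exact (continuous_const.mul hf).intervalIntegrable _ _
    · exact ((hf.pow 2).sub (continuous_const.mul hf)).intervalIntegrable _ _
    · exact intervalIntegrable_const
  rw [hexp] at h0
  have hmul : m * ξ = I := by rw [hm, div_mul_cancel₀ I hξ.ne']
  nlinarith [sq_nonneg I, sq_nonneg m]

lemma poincare {f : ℝ → ℝ} (hf : ContDiff ℝ 4 f) {L : ℝ} (hL : 0 < L)
    (h0 : f 0 = 0) (hLv : f L = 0) :
    (deriv f 0) ^ 2 ≤ L * ∫ x in (0:ℝ)..L, (iteratedDeriv 2 f x) ^ 2 := by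
  obtain ⟨ξ, hξ, hdξ⟩ := exists_deriv_eq_zero hL (hf.continuous.continuousOn)
    (by rw [h0, hLv])
  have hc2 : Continuous (iteratedDeriv 2 f) := aux_cont hf 2 (by norm_num)
  have hftc : ∫ x in (0:ℝ)..ξ, iteratedDeriv 2 f x = deriv f ξ - deriv f 0 := by
    have : ∀ x ∈ Set.uIcc (0:ℝ) ξ, HasDerivAt (deriv f) (iteratedDeriv 2 f x) x := by
      intro x _
      have := aux_hasDeriv hf 1 (by norm_num) x
      rwa [iteratedDeriv_one] at this
    exact intervalIntegral.integral_eq_sub_of_hasDerivAt this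
      (hc2.intervalIntegrable _ _)
  have h1 : deriv f 0 = - ∫ x in (0:ℝ)..ξ, iteratedDeriv 2 f x := by
    rw [hftc, hdξ]; ring
  have h2 : (deriv f 0) ^ 2 ≤ ξ * ∫ x in (0:ℝ)..ξ, (iteratedDeriv 2 f x) ^ 2 := by
    rw [h1, neg_pow]
    simpa using cs_sq hc2 hξ.1
  have h3 : ∫ x in (0:ℝ)..ξ, (iteratedDeriv 2 f x) ^ 2
      ≤ ∫ x in (0:ℝ)..L, (iteratedDeriv 2 f x) ^ 2 := by
    rw [← intervalIntegral.integral_add_adjacent_intervals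
      (show IntervalIntegrable (fun x => (iteratedDeriv 2 f x) ^ 2) volume 0 ξ from
        (hc2.pow 2).intervalIntegrable (0:ℝ) ξ)
      (show IntervalIntegrable (fun x => (iteratedDeriv 2 f x) ^ 2) volume ξ L from
        (hc2.pow 2).intervalIntegrable ξ L)]
    have : (0:ℝ) ≤ ∫ x in ξ..L, (iteratedDeriv 2 f x) ^ 2 :=
      intervalIntegral.integral_nonneg hξ.2.le (fun x _ => by positivity)
    linarith
  have hnn : (0:ℝ) ≤ ∫ x in (0:ℝ)..ξ, (iteratedDeriv 2 f x) ^ 2 :=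
    intervalIntegral.integral_nonneg hξ.1.le (fun x _ => by positivity)
  nlinarith [hξ.2, hξ.1]

lemma energy_identity (ε δ M : ℝ) {L : ℝ} (hL : 0 < L) {f ψ g0 : ℝ → ℝ}
    (hf : ContDiff ℝ 4 f) (hψ : Continuous ψ) (hg : Continuous g0)
    (h0 : f 0 = 0) (hLv : f L = 0)
    (hbc0 : ε * iteratedDeriv 2 f 0 - δ/2 * deriv f 0 = 0)
    (hbcL : ε * iteratedDeriv 2 f L - δ/2 * deriv f L = 0)
    (hpde : ∀ x ∈ Set.Ioo (0:ℝ) L,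
      ψ x + ε * iteratedDeriv 4 f x - δ * iteratedDeriv 3 f x - M * deriv f x = g0 x) :
    ∫ x in (0:ℝ)..L, 2 * (f x * ψ x)
      = 2 * (∫ x in (0:ℝ)..L, f x * g0 x)
        - 2 * ε * ∫ x in (0:ℝ)..L, (iteratedDeriv 2 f x) ^ 2 := by
  set F1 := iteratedDeriv 1 f with hF1
  set F2 := iteratedDeriv 2 f with hF2
  set F3 := iteratedDeriv 3 f with hF3
  set F4 := iteratedDeriv 4 f with hF4
  have hder : deriv f = F1 := iteratedDeriv_one.symm
  have hc0 : Continuous f := hf.continuous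
  have hc1 : Continuous F1 := aux_cont hf 1 (by norm_num)
  have hc2 : Continuous F2 := aux_cont hf 2 (by norm_num)
  have hc3 : Continuous F3 := aux_cont hf 3 (by norm_num)
  have hc4 : Continuous F4 := aux_cont hf 4 (by norm_num)
  have hd0 : ∀ x ∈ Set.uIcc (0:ℝ) L, HasDerivAt f (F1 x) x := by
    intro x _; have := aux_hasDeriv hf 0 (by norm_num) x; rwa [iteratedDeriv_zero] at this
  have hd1 : ∀ x ∈ Set.uIcc (0:ℝ) L, HasDerivAt F1 (F2 x) x := fun x _ =>
    aux_hasDeriv hf 1 (by norm_num) x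
  have hd2 : ∀ x ∈ Set.uIcc (0:ℝ) L, HasDerivAt F2 (F3 x) x := fun x _ =>
    aux_hasDeriv hf 2 (by norm_num) x
  have hd3 : ∀ x ∈ Set.uIcc (0:ℝ) L, HasDerivAt F3 (F4 x) x := fun x _ =>
    aux_hasDeriv hf 3 (by norm_num) x
  have ii : ∀ {u : ℝ → ℝ}, Continuous u → IntervalIntegrable u volume 0 L :=
    fun hu => hu.intervalIntegrable 0 L
  have ibp1 : ∫ x in (0:ℝ)..L, f x * F4 x
      = f L * F3 L - f 0 * F3 0 - ∫ x in (0:ℝ)..L, F1 x * F3 x :=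
    intervalIntegral.integral_mul_deriv_eq_deriv_mul hd0 hd3 (ii hc1) (ii hc4)
  have ibp2 : ∫ x in (0:ℝ)..L, F1 x * F3 x
      = F1 L * F2 L - F1 0 * F2 0 - ∫ x in (0:ℝ)..L, F2 x * F2 x :=
    intervalIntegral.integral_mul_deriv_eq_deriv_mul hd1 hd2 (ii hc2) (ii hc3)
  have ibp3 : ∫ x in (0:ℝ)..L, f x * F3 x
      = f L * F2 L - f 0 * F2 0 - ∫ x in (0:ℝ)..L, F1 x * F2 x :=
    intervalIntegral.integral_mul_deriv_eq_deriv_mul hd0 hd2 (ii hc1) (ii hc3)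
  have ibp4 : ∫ x in (0:ℝ)..L, F1 x * F2 x
      = F1 L * F1 L - F1 0 * F1 0 - ∫ x in (0:ℝ)..L, F2 x * F1 x :=
    intervalIntegral.integral_mul_deriv_eq_deriv_mul hd1 hd1 (ii hc2) (ii hc2)
  have ibp5 : ∫ x in (0:ℝ)..L, f x * F1 x
      = f L * f L - f 0 * f 0 - ∫ x in (0:ℝ)..L, F1 x * f x :=
    intervalIntegral.integral_mul_deriv_eq_deriv_mul hd0 hd0 (ii hc1) (ii hc1)
  have comm1 : ∫ x in (0:ℝ)..L, F2 x * F1 x = ∫ x in (0:ℝ)..L, F1 x * F2 x :=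
    intervalIntegral.integral_congr (fun x _ => mul_comm _ _)
  have comm2 : ∫ x in (0:ℝ)..L, F1 x * f x = ∫ x in (0:ℝ)..L, f x * F1 x :=
    intervalIntegral.integral_congr (fun x _ => mul_comm _ _)
  have hJ : ∫ x in (0:ℝ)..L, F1 x * F2 x = (F1 L ^ 2 - F1 0 ^ 2) / 2 := by
    rw [comm1] at ibp4; nlinarith [ibp4]
  have hCc : ∫ x in (0:ℝ)..L, f x * F1 x = 0 := by
    rw [comm2] at ibp5; nlinarith [ibp5]
  have hKsq : ∫ x in (0:ℝ)..L, F2 x * F2 x = ∫ x in (0:ℝ)..L, F2 x ^ 2 :=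
    intervalIntegral.integral_congr (fun x _ => (sq (F2 x)).symm)
  have hLne : ∀ᵐ x : ℝ, x ≠ L := by
    rw [ae_iff]
    convert Real.volume_singleton (a := L) using 2
    ext x; simp [eq_comm]
  have hae : ∀ᵐ x ∂(volume : Measure ℝ), x ∈ Set.uIoc (0:ℝ) L →
      2 * (f x * ψ x)
        = 2 * (f x * g0 x) + (-(2*ε)) * (f x * F4 x)
            + ((2*δ) * (f x * F3 x) + (2*M) * (f x * F1 x)) := by
    filter_upwards [hLne] with x hx hxI
    rw [Set.uIoc_of_le hL.le] at hxI
    have hxo : x ∈ Set.Ioo (0:ℝ) L := ⟨hxI.1, lt_of_le_of_ne hxI.2 hx⟩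
    have hp := hpde x hxo
    rw [hder] at hp
    have : ψ x = g0 x - ε * F4 x + δ * F3 x + M * F1 x := by linarith
    rw [this]; ring
  have hsplit : ∫ x in (0:ℝ)..L, 2 * (f x * ψ x)
      = 2 * (∫ x in (0:ℝ)..L, f x * g0 x)
        + (-(2*ε)) * (∫ x in (0:ℝ)..L, f x * F4 x)
        + ((2*δ) * (∫ x in (0:ℝ)..L, f x * F3 x)
          + (2*M) * (∫ x in (0:ℝ)..L, f x * F1 x)) := by
    rw [intervalIntegral.integral_congr_ae hae]
    rw [intervalIntegral.integral_add
        (f := fun x => 2 * (f x * g0 x) + (-(2*ε)) * (f x * F4 x))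
        (g := fun x => (2*δ) * (f x * F3 x) + (2*M) * (f x * F1 x))
        (ii ((continuous_const.mul (hc0.mul hg)).add (continuous_const.mul (hc0.mul hc4))))
        (ii ((continuous_const.mul (hc0.mul hc3)).add (continuous_const.mul (hc0.mul hc1)))),
      intervalIntegral.integral_add (f := fun x => 2 * (f x * g0 x))
        (g := fun x => (-(2*ε)) * (f x * F4 x))
        (ii (continuous_const.mul (hc0.mul hg))) (ii (continuous_const.mul (hc0.mul hc4))),
      intervalIntegral.integral_add (f := fun x => (2*δ) * (f x * F3 x))
        (g := fun x => (2*M) * (f x * F1 x))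
        (ii (continuous_const.mul (hc0.mul hc3))) (ii (continuous_const.mul (hc0.mul hc1))),
      intervalIntegral.integral_const_mul, intervalIntegral.integral_const_mul,
      intervalIntegral.integral_const_mul, intervalIntegral.integral_const_mul]
  rw [hder] at hbc0 hbcL
  rw [hsplit, ibp1, ibp2, ibp3, hJ, hCc, hKsq, h0, hLv]
  linear_combination (2 * F1 L) * hbcL - (2 * F1 0) * hbc0

lemma hasDerivAt_energy {φ : ℝ → ℝ → ℝ} (L : ℝ)
    (hφc : Continuous fun p : ℝ × ℝ => φ p.1 p.2)
    (hdiff : ∀ t x : ℝ, DifferentiableAt ℝ (fun s => φ s x) t)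
    (hψc : Continuous fun p : ℝ × ℝ => deriv (fun s => φ s p.2) p.1)
    (t₀ : ℝ) :
    HasDerivAt (fun t => ∫ x in (0:ℝ)..L, (φ t x) ^ 2)
      (∫ x in (0:ℝ)..L, 2 * (φ t₀ x * deriv (fun s => φ s x) t₀)) t₀ := by
  set ψ : ℝ → ℝ → ℝ := fun t x => deriv (fun s => φ s x) t with hψ
  set K : Set (ℝ × ℝ) := (Icc (t₀ - 1) (t₀ + 1)) ×ˢ (uIcc (0:ℝ) L) with hK
  have hKcomp : IsCompact K := (isCompact_Icc).prod isCompact_uIcc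
  obtain ⟨C, hC⟩ := hKcomp.exists_bound_of_continuousOn
    ((continuous_const.mul (hφc.mul hψc)).continuousOn :
      ContinuousOn (fun p : ℝ × ℝ => 2 * (φ p.1 p.2 * ψ p.1 p.2)) K)
  have main := intervalIntegral.hasDerivAt_integral_of_dominated_loc_of_deriv_le
    (F := fun t x => (φ t x) ^ 2) (F' := fun t x => 2 * (φ t x * ψ t x))
    (x₀ := t₀) (a := (0:ℝ)) (b := L) (μ := volume) (bound := fun _ => C)
    (s := Metric.ball t₀ 1) (Metric.ball_mem_nhds t₀ one_pos)
    (Filter.Eventually.of_forall fun t =>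
      (Continuous.aestronglyMeasurable (by fun_prop)))
    ((Continuous.intervalIntegrable (by fun_prop) _ _))
    (Continuous.aestronglyMeasurable
      (continuous_const.mul ((hφc.comp (Continuous.prodMk_right t₀)).mul
        (hψc.comp (Continuous.prodMk_right t₀)))))
    ?_ intervalIntegrable_const ?_
  · exact main.2
  · refine Filter.Eventually.of_forall fun x hx t ht => ?_
    have hmem : (t, x) ∈ K := by
      constructor
      · have := Metric.mem_ball.1 ht
        rw [Real.dist_eq] at this
        constructor <;> [linarith [abs_lt.1 this |>.1]; linarith [abs_lt.1 this |>.2]]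
      · exact uIoc_subset_uIcc hx
    simpa using hC _ hmem
  · refine Filter.Eventually.of_forall fun x _ t _ => ?_
    have h := ((hdiff t x).hasDerivAt).pow 2
    refine h.congr_deriv ?_
    simp [hψ]; ring

/-- boundary-observation estimate
`ε ∫₀^T φ_x(t,0)² dt ≤ C (∫₀^L φ(0,x)² dx + ∫₀^T∫₀^L g² dx dt)`
with `C` depending only on `T` and `L` (independent of `ε ∈ (0,1]`, `φ` and `g`). -/
theorem stmt_19 (T L : ℝ) (hT : 0 < T) (hL : 0 < L) :
    ∃ C : ℝ, 0 < C ∧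
      ∀ (ε M M13 δ : ℝ), ε ∈ Set.Ioc (0:ℝ) 1 → M ≠ 0 → M13 ^ 3 = M →
        δ = -2 * ε ^ ((2:ℝ)/3) * M13 →
      ∀ g φ : ℝ → ℝ → ℝ,
        (Continuous fun p : ℝ × ℝ => g p.1 p.2) →
        (∀ t : ℝ, ContDiff ℝ 4 (φ t)) →
        (∀ t x : ℝ, DifferentiableAt ℝ (fun s => φ s x) t) →
        (Continuous fun p : ℝ × ℝ => deriv (fun s => φ s p.2) p.1) →
        (∀ n : ℕ, n ≤ 4 →
          Continuous fun p : ℝ × ℝ => iteratedDeriv n (φ p.1) p.2) →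
        (∀ t ∈ Set.Ioo (0:ℝ) T, ∀ x ∈ Set.Ioo (0:ℝ) L,
          deriv (fun s => φ s x) t + ε * iteratedDeriv 4 (φ t) x
            - δ * iteratedDeriv 3 (φ t) x - M * deriv (φ t) x = g t x) →
        (∀ t ∈ Set.Ioo (0:ℝ) T, φ t 0 = 0 ∧ φ t L = 0) →
        (∀ t ∈ Set.Ioo (0:ℝ) T,
          (ε * iteratedDeriv 2 (φ t) 0 - δ/2 * deriv (φ t) 0 = 0) ∧
          (ε * iteratedDeriv 2 (φ t) L - δ/2 * deriv (φ t) L = 0)) →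
        ε * (∫ t in (0:ℝ)..T, (deriv (φ t) 0)^2)
          ≤ C * ((∫ x in (0:ℝ)..L, (φ 0 x)^2)
            + ∫ t in (0:ℝ)..T, ∫ x in (0:ℝ)..L, (g t x)^2) := by
  refine ⟨L * (1 + T * Real.exp T), by positivity, ?_⟩
  intro ε M M13 δ hε hM hM13 hδ g φ hgc hφ4 hφt hψc hitc hpde hbv hbc
  have hφc : Continuous fun p : ℝ × ℝ => φ p.1 p.2 := by
    have := hitc 0 (by norm_num); simpa [iteratedDeriv_zero] using this
  set ψ : ℝ → ℝ → ℝ := fun t x => deriv (fun s => φ s x) t with hψdef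
  set E : ℝ → ℝ := fun t => ∫ x in (0:ℝ)..L, (φ t x) ^ 2 with hEdef
  set a : ℝ → ℝ := fun t => ∫ x in (0:ℝ)..L, (iteratedDeriv 2 (φ t) x) ^ 2 with hadef
  set b : ℝ → ℝ := fun t => ∫ x in (0:ℝ)..L, φ t x * g t x with hbdef
  set G : ℝ → ℝ := fun t => ∫ x in (0:ℝ)..L, (g t x) ^ 2 with hGdef
  set D : ℝ → ℝ := fun t => 2 * b t - 2 * ε * a t with hDdef
  set Q : ℝ := ∫ t in (0:ℝ)..T, G t with hQdef
  -- continuity of the parametric integrals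
  have hEc : Continuous E :=
    intervalIntegral.continuous_parametric_intervalIntegral_of_continuous'
      (f := fun t x => (φ t x) ^ 2) (by rw [Function.uncurry_def]; exact hφc.pow 2) 0 L
  have hac : Continuous a :=
    intervalIntegral.continuous_parametric_intervalIntegral_of_continuous'
      (f := fun t x => (iteratedDeriv 2 (φ t) x) ^ 2) (by rw [Function.uncurry_def]; exact (hitc 2 (by norm_num)).pow 2) 0 L
  have hbc' : Continuous b :=
    intervalIntegral.continuous_parametric_intervalIntegral_of_continuous'
      (f := fun t x => φ t x * g t x) (hφc.mul hgc) 0 L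
  have hGc : Continuous G :=
    intervalIntegral.continuous_parametric_intervalIntegral_of_continuous'
      (f := fun t x => (g t x) ^ 2) (by rw [Function.uncurry_def]; exact hgc.pow 2) 0 L
  have hDc : Continuous D := (continuous_const.mul hbc').sub (continuous_const.mul hac)
  -- nonnegativity
  have hE_nn : ∀ t, 0 ≤ E t := fun t =>
    intervalIntegral.integral_nonneg hL.le (fun x _ => by positivity)
  have ha_nn : ∀ t, 0 ≤ a t := fun t =>
    intervalIntegral.integral_nonneg hL.le (fun x _ => by positivity)
  have hG_nn : ∀ t, 0 ≤ G t := fun t =>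
    intervalIntegral.integral_nonneg hL.le (fun x _ => by positivity)
  have hQ_nn : 0 ≤ Q :=
    intervalIntegral.integral_nonneg hT.le (fun t _ => hG_nn t)
  -- pointwise 2 b ≤ E + G
  have h2b : ∀ s, 2 * b s ≤ E s + G s := by
    intro s
    have hφs : Continuous (φ s) := hφc.comp (Continuous.prodMk_right s)
    have hgs : Continuous (g s) := hgc.comp (Continuous.prodMk_right s)
    have hnn : (0:ℝ) ≤ ∫ x in (0:ℝ)..L, (φ s x - g s x) ^ 2 :=
      intervalIntegral.integral_nonneg hL.le (fun x _ => by positivity)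
    have hexp : ∫ x in (0:ℝ)..L, (φ s x - g s x) ^ 2
        = E s - 2 * b s + G s := by
      have h1 : ∀ x, (φ s x - g s x) ^ 2
          = (φ s x) ^ 2 - 2 * (φ s x * g s x) + (g s x) ^ 2 := fun x => by ring
      rw [intervalIntegral.integral_congr (fun x _ => h1 x)]
      rw [intervalIntegral.integral_add (f := fun x => (φ s x) ^ 2 - 2 * (φ s x * g s x))
          (g := fun x => (g s x) ^ 2)
          (((hφs.pow 2).sub (continuous_const.mul (hφs.mul hgs))).intervalIntegrable _ _)
          ((hgs.pow 2).intervalIntegrable _ _),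
        intervalIntegral.integral_sub (f := fun x => (φ s x) ^ 2)
          (g := fun x => 2 * (φ s x * g s x)) ((hφs.pow 2).intervalIntegrable _ _)
          ((continuous_const.mul (hφs.mul hgs)).intervalIntegrable _ _),
        intervalIntegral.integral_const_mul]
    linarith
  -- boundary values extend to the closed interval
  have hbvIcc : ∀ t ∈ Icc (0:ℝ) T, φ t 0 = 0 ∧ φ t L = 0 := by
    have hcl : ∀ y : ℝ, (∀ t ∈ Ioo (0:ℝ) T, φ t y = 0) → ∀ t ∈ Icc (0:ℝ) T, φ t y = 0 := by
      intro y hy t ht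
      have hcy : Continuous fun t => φ t y :=
        hφc.comp (continuous_id.prodMk continuous_const)
      have hS : IsClosed {t : ℝ | φ t y = 0} := isClosed_eq hcy continuous_const
      have hsub : Icc (0:ℝ) T ⊆ {t : ℝ | φ t y = 0} := by
        rw [← closure_Ioo hT.ne]
        exact closure_minimal (fun s hs => hy s hs) hS
      exact hsub ht
    exact fun t ht =>
      ⟨hcl 0 (fun s hs => (hbv s hs).1) t ht, hcl L (fun s hs => (hbv s hs).2) t ht⟩
  -- the energy derivative identity
  have hEderiv : ∀ t ∈ Ioo (0:ℝ) T, HasDerivAt E (D t) t := by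
    intro t ht
    have h1 := hasDerivAt_energy L hφc hφt hψc t
    have hψt : Continuous fun x => deriv (fun s => φ s x) t :=
      hψc.comp (Continuous.prodMk_right t)
    have hgt : Continuous (g t) := hgc.comp (Continuous.prodMk_right t)
    have htI : t ∈ Icc (0:ℝ) T := ⟨ht.1.le, ht.2.le⟩
    have h2 := energy_identity ε δ M hL (hφ4 t) hψt hgt
      (hbvIcc t htI).1 (hbvIcc t htI).2 (hbc t ht).1 (hbc t ht).2
      (fun x hx => hpde t ht x hx)
    rw [h2] at h1
    exact h1
  -- FTC on [0, T]
  have hFTC : ∫ t in (0:ℝ)..T, D t = E T - E 0 :=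
    intervalIntegral.integral_eq_sub_of_hasDeriv_right_of_le hT.le hEc.continuousOn
      (fun t ht => (hEderiv t ht).hasDerivWithinAt) (hDc.intervalIntegrable _ _)
  -- Gronwall-type bound
  have hEbound : ∀ t ∈ Icc (0:ℝ) T, E t ≤ Real.exp T * (E 0 + Q) := by
    intro t ht
    have hexpd : ∀ s : ℝ, HasDerivAt (fun u => Real.exp (-u)) (-Real.exp (-s)) s := by
      intro s
      have := (Real.hasDerivAt_exp (-s)).comp s ((hasDerivAt_id s).neg)
      simpa [Function.comp_def] using this
    set H' : ℝ → ℝ := fun s => (D s - E s) * Real.exp (-s) with hH'def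
    have hH'c : Continuous H' :=
      ((hDc.sub hEc).mul (Real.continuous_exp.comp continuous_neg))
    have hHd : ∀ s ∈ Ioo (0:ℝ) t, HasDerivAt (fun u => E u * Real.exp (-u)) (H' s) s := by
      intro s hs
      have hsT : s ∈ Ioo (0:ℝ) T := ⟨hs.1, lt_of_lt_of_le hs.2 ht.2⟩
      have := (hEderiv s hsT).mul (hexpd s)
      refine this.congr_deriv ?_
      simp [hH'def]; ring
    have hFTC2 : ∫ s in (0:ℝ)..t, H' s = E t * Real.exp (-t) - E 0 := by
      have h := intervalIntegral.integral_eq_sub_of_hasDeriv_right_of_le ht.1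
        ((hEc.mul (Real.continuous_exp.comp continuous_neg)).continuousOn)
        (fun s hs => (hHd s hs).hasDerivWithinAt) (hH'c.intervalIntegrable _ _)
      simpa using h
    have hmono : ∫ s in (0:ℝ)..t, H' s ≤ ∫ s in (0:ℝ)..t, G s := by
      apply intervalIntegral.integral_mono_on ht.1 (hH'c.intervalIntegrable _ _)
        (hGc.intervalIntegrable _ _)
      intro s hs
      have hDE : D s - E s ≤ G s := by
        have h2bs := h2b s
        have has := ha_nn s
        have := mul_nonneg hε.1.le has
        simp only [hDdef]
        linarith
      have hexple : Real.exp (-s) ≤ 1 := by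
        rw [Real.exp_le_one_iff]; linarith [hs.1]
      rcases le_or_gt (D s - E s) 0 with h | h
      · have hneg : H' s ≤ 0 := mul_nonpos_of_nonpos_of_nonneg h (Real.exp_pos _).le
        exact hneg.trans (hG_nn s)
      · calc H' s ≤ (D s - E s) * 1 := by
              exact mul_le_mul_of_nonneg_left hexple h.le
          _ = D s - E s := mul_one _
          _ ≤ G s := hDE
    have hGQ : ∫ s in (0:ℝ)..t, G s ≤ Q := by
      have hsplit := intervalIntegral.integral_add_adjacent_intervals
        (hGc.intervalIntegrable (μ := volume) 0 t) (hGc.intervalIntegrable (μ := volume) t T)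
      have h2 : 0 ≤ ∫ s in t..T, G s :=
        intervalIntegral.integral_nonneg ht.2 (fun s _ => hG_nn s)
      rw [hQdef]
      linarith [hsplit]
    have hkey : E t * Real.exp (-t) ≤ E 0 + Q := by
      have := hFTC2 ▸ (hmono.trans hGQ)
      linarith
    have hPQnn : 0 ≤ E 0 + Q := by linarith [hE_nn 0]
    calc E t = E t * Real.exp (-t) * Real.exp t := by
          rw [mul_assoc, ← Real.exp_add]; simp
      _ ≤ (E 0 + Q) * Real.exp t :=
          mul_le_mul_of_nonneg_right hkey (Real.exp_pos t).le
      _ ≤ (E 0 + Q) * Real.exp T :=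
          mul_le_mul_of_nonneg_left (Real.exp_le_exp.2 ht.2) hPQnn
      _ = Real.exp T * (E 0 + Q) := mul_comm _ _
  -- integral of E
  have hintE : ∫ t in (0:ℝ)..T, E t ≤ T * (Real.exp T * (E 0 + Q)) := by
    have h := intervalIntegral.integral_mono_on hT.le (hEc.intervalIntegrable 0 T)
      (intervalIntegrable_const :
        IntervalIntegrable (fun _ : ℝ => Real.exp T * (E 0 + Q)) volume 0 T) hEbound
    have heq : Real.exp T * (T * E 0 + T * Q) = T * (Real.exp T * (E 0 + Q)) := by ring
    simp at h
    linarith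
  -- integral of b
  have hintb : ∫ t in (0:ℝ)..T, b t
      ≤ (∫ t in (0:ℝ)..T, E t) / 2 + Q / 2 := by
    have h := intervalIntegral.integral_mono_on hT.le
      (hbc'.intervalIntegrable (μ := volume) 0 T)
      (((hEc.add hGc).div_const 2).intervalIntegrable (μ := volume) 0 T)
      (fun t _ => by linarith [h2b t] : ∀ t ∈ Icc (0:ℝ) T, b t ≤ (E t + G t) / 2)
    rw [intervalIntegral.integral_div] at h
    simp only [Pi.add_apply] at h
    rw [intervalIntegral.integral_add
      (hEc.intervalIntegrable (μ := volume) 0 T)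
      (hGc.intervalIntegrable (μ := volume) 0 T)] at h
    rw [hQdef]
    linarith
  -- ε ∫ a in terms of ∫ b
  have hεa : ε * ∫ t in (0:ℝ)..T, a t ≤ (∫ t in (0:ℝ)..T, b t) + E 0 / 2 := by
    have hDlin : ∫ t in (0:ℝ)..T, D t
        = 2 * (∫ t in (0:ℝ)..T, b t) - 2 * ε * ∫ t in (0:ℝ)..T, a t := by
      simp only [hDdef]
      rw [intervalIntegral.integral_sub (f := fun t => 2 * b t) (g := fun t => 2 * ε * a t)
          ((continuous_const.mul hbc').intervalIntegrable _ _)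
        ((continuous_const.mul hac).intervalIntegrable _ _),
        intervalIntegral.integral_const_mul, intervalIntegral.integral_const_mul]
    have hET := hE_nn T
    rw [hDlin] at hFTC
    linarith
  -- Poincaré bound for the boundary derivative
  have hccont : Continuous fun t => (deriv (φ t) 0) ^ 2 := by
    have h1 : (fun t => (deriv (φ t) 0) ^ 2)
        = fun t => (iteratedDeriv 1 (φ t) 0) ^ 2 := by
      funext t; rw [iteratedDeriv_one]
    rw [h1]
    exact ((hitc 1 (by norm_num)).comp (continuous_id.prodMk continuous_const)).pow 2
  have hpc : ∫ t in (0:ℝ)..T, (deriv (φ t) 0) ^ 2 ≤ L * ∫ t in (0:ℝ)..T, a t := by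
    have h := intervalIntegral.integral_mono_on hT.le
      (hccont.intervalIntegrable (μ := volume) 0 T)
      ((continuous_const.mul hac).intervalIntegrable (μ := volume) 0 T)
      (fun t ht => poincare (hφ4 t) hL (hbvIcc t ht).1 (hbvIcc t ht).2)
    simp only [Pi.mul_apply] at h
    rwa [intervalIntegral.integral_const_mul] at h
  -- put everything together
  have hεpos := hε.1
  have hfin : ε * ∫ t in (0:ℝ)..T, (deriv (φ t) 0) ^ 2
      ≤ L * (1 + T * Real.exp T) * (E 0 + Q) := by
    have s1 : ε * ∫ t in (0:ℝ)..T, (deriv (φ t) 0) ^ 2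
        ≤ ε * (L * ∫ t in (0:ℝ)..T, a t) :=
      mul_le_mul_of_nonneg_left hpc hεpos.le
    have s2 : ε * (L * ∫ t in (0:ℝ)..T, a t) = L * (ε * ∫ t in (0:ℝ)..T, a t) := by ring
    have s3 : ε * ∫ t in (0:ℝ)..T, a t
        ≤ T * (Real.exp T * (E 0 + Q)) / 2 + Q / 2 + E 0 / 2 := by
      linarith
    have hPQnn : 0 ≤ E 0 + Q := by linarith [hE_nn 0]
    have hTexp : 0 < T * Real.exp T := mul_pos hT (Real.exp_pos T)
    have s4 : T * (Real.exp T * (E 0 + Q)) / 2 + Q / 2 + E 0 / 2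
        ≤ (1 + T * Real.exp T) * (E 0 + Q) := by nlinarith
    calc ε * ∫ t in (0:ℝ)..T, (deriv (φ t) 0) ^ 2
        ≤ L * (ε * ∫ t in (0:ℝ)..T, a t) := by rw [← s2]; exact s1
      _ ≤ L * (T * (Real.exp T * (E 0 + Q)) / 2 + Q / 2 + E 0 / 2) :=
          mul_le_mul_of_nonneg_left s3 hL.le
      _ ≤ L * ((1 + T * Real.exp T) * (E 0 + Q)) :=
          mul_le_mul_of_nonneg_left s4 hL.le
      _ = L * (1 + T * Real.exp T) * (E 0 + Q) := by ring
  exact hfin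
end
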